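/- arXiv:1710.02394 — 4 statements merged into one kernel-verified Lean document; each statement's English description precedes it below -/
import Mathlib

section
/- Let c ≠ 0 and define d(P,Q) = N(P⁻¹·Q) with N(x,y,z) = √(x² + y² + (z − xy/2)²) on the Heisenberg group (ℝ³,·). A point (x,y,z) satisfies d((0,0,0),(x,y,z)) = d((x,y,z),(0,0,c)) if and only if z = (c + x·y)/2. -/
/-!
Writing `w = z - xy/2` for the vertical exponential coordinate of `P = (x,y,z)`, the points
`P` and `P⁻¹·(0,0,c)` have the same horizontal part up to sign and vertical exponential
coordinates `w` and `c - w`. So `P` is equidistant from the origin and `(0,0,c)` iff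
`w² = (c - w)²`, that is `c (c - 2w) = 0`, and as `c ≠ 0` iff `w = c/2`.
-/

def hmul (p q : ℝ × ℝ × ℝ) : ℝ × ℝ × ℝ :=
  (p.1 + q.1, p.2.1 + q.2.1, p.2.2 + q.2.2 + p.1 * q.2.1)

def hinv (p : ℝ × ℝ × ℝ) : ℝ × ℝ × ℝ :=
  (-p.1, -p.2.1, p.1 * p.2.1 - p.2.2)

noncomputable def N (p : ℝ × ℝ × ℝ) : ℝ :=
  Real.sqrt (p.1 ^ 2 + p.2.1 ^ 2 + (p.2.2 - p.1 * p.2.1 / 2) ^ 2)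

noncomputable def d (p q : ℝ × ℝ × ℝ) : ℝ := N (hmul (hinv p) q)

theorem sq_eq_sub_sq_iff_eq_half {K : Type*} [Field K] [NeZero (2 : K)] {c w : K}
    (hc : c ≠ 0) : w ^ 2 = (c - w) ^ 2 ↔ w = c / 2 := by
  rw [sq_eq_sq_iff_eq_or_eq_neg, eq_div_iff (NeZero.ne 2)]
  constructor
  · rintro (h | h)
    · linear_combination h
    · exact absurd (by linear_combination h : c = 0) hc
  · intro h
    left
    linear_combination h

theorem N_eq_N_iff_of_horizontal {p q : ℝ × ℝ × ℝ}
    (h : p.1 ^ 2 + p.2.1 ^ 2 = q.1 ^ 2 + q.2.1 ^ 2) :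
    N p = N q ↔ (p.2.2 - p.1 * p.2.1 / 2) ^ 2 = (q.2.2 - q.1 * q.2.1 / 2) ^ 2 := by
  rw [N, N, Real.sqrt_inj (by positivity) (by positivity), h, add_right_inj]

theorem d_origin_left (q : ℝ × ℝ × ℝ) : d (0, 0, 0) q = N q := by
  simp [d, hmul, hinv]

theorem d_vertical_right (p : ℝ × ℝ × ℝ) (c : ℝ) :
    d p (0, 0, c) = N (-p.1, -p.2.1, p.1 * p.2.1 - p.2.2 + c) := by
  simp [d, hmul, hinv]

theorem nil_bisector_vertical (c x y z : ℝ) (hc : c ≠ 0) :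
    d ((0 : ℝ), (0 : ℝ), (0 : ℝ)) (x, y, z) = d (x, y, z) ((0 : ℝ), (0 : ℝ), c) ↔
      z = (c + x * y) / 2 := by
  rw [d_origin_left, d_vertical_right, N_eq_N_iff_of_horizontal (by simp only [neg_sq])]
  have hw : x * y - z + c - -x * -y / 2 = c - (z - x * y / 2) := by ring
  rw [hw, sq_eq_sub_sq_iff_eq_half hc]
  constructor <;> intro h <;> linarith
end

section
/- Let a ≠ 0 and define the translation distance d(P,Q) = N(P⁻¹·Q) with N(x,y,z) = √(x² + y² + (z − xy/2)²) on the Heisenberg group (ℝ³,·). For any point (x,y,z) with y ≠ 0, d((0,0,0),(x,y,z)) = d((x,y,z),(a,0,0)) holds if and only if z = (a(y² + 4) + 2x(y² − 4))/(4y). -/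
/-! Both distances are square roots, so equidistance is the vanishing of the difference of their
squares. That difference is `a` times an expression affine in `z` with slope `y`, so for `a ≠ 0`
and `y ≠ 0` the bisector is a graph over the `(x, y)`-plane. -/

lemma d_nonneg (p q : ℝ × ℝ × ℝ) : 0 ≤ d p q := Real.sqrt_nonneg _

lemma N_sq (p : ℝ × ℝ × ℝ) : N p ^ 2 = p.1 ^ 2 + p.2.1 ^ 2 + (p.2.2 - p.1 * p.2.1 / 2) ^ 2 :=
  Real.sq_sqrt (by positivity)

lemma hmul_hinv (x y z a b c : ℝ) :
    hmul (hinv (x, y, z)) (a, b, c) = (a - x, b - y, c - z + x * y - x * b) := by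
  simp only [hmul, hinv, Prod.mk.injEq]
  exact ⟨by ring, by ring, by ring⟩

lemma d_sq (x y z a b c : ℝ) :
    d (x, y, z) (a, b, c) ^ 2 =
      (a - x) ^ 2 + (b - y) ^ 2 + (c - z + x * y - x * b - (a - x) * (b - y) / 2) ^ 2 := by
  rw [d, hmul_hinv, N_sq]

lemma d_origin_sq_sub_d_sq (a x y z : ℝ) :
    d (0, 0, 0) (x, y, z) ^ 2 - d (x, y, z) (a, 0, 0) ^ 2 =
      a * (y * (z - x * y / 2) + 2 * x - a * (y ^ 2 + 4) / 4) := by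
  rw [d_sq, d_sq]
  ring

theorem nil_bisector_x_axis (a x y z : ℝ) (ha : a ≠ 0) (hy : y ≠ 0) :
    d ((0 : ℝ), (0 : ℝ), (0 : ℝ)) (x, y, z) = d (x, y, z) (a, (0 : ℝ), (0 : ℝ)) ↔
      z = (a * (y ^ 2 + 4) + 2 * x * (y ^ 2 - 4)) / (4 * y) := by
  rw [← pow_left_inj₀ (d_nonneg _ _) (d_nonneg _ _) two_ne_zero, ← sub_eq_zero,
    d_origin_sq_sub_d_sq, mul_eq_zero, or_iff_right ha, eq_div_iff (mul_ne_zero four_ne_zero hy)]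
  constructor
  · intro h
    linear_combination 4 * h
  · intro h
    linear_combination h / 4
end

section
/- Let b ≠ 0 and define the translation distance d(P,Q) = N(P⁻¹·Q) with N(x,y,z) = √(x² + y² + (z − xy/2)²) on the Heisenberg group (ℝ³,·). For any point (x,y,z) with x ≠ 0, d((0,0,0),(x,y,z)) = d((x,y,z),(0,b,0)) holds if and only if z = −(x² + 4)(b − 2y)/(4x). -/
noncomputable def gaugeSq (p : ℝ × ℝ × ℝ) : ℝ :=
  p.1 ^ 2 + p.2.1 ^ 2 + (p.2.2 - p.1 * p.2.1 / 2) ^ 2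

lemma gaugeSq_nonneg (p : ℝ × ℝ × ℝ) : 0 ≤ gaugeSq p := by
  unfold gaugeSq
  positivity

lemma N_eq_sqrt_gaugeSq (p : ℝ × ℝ × ℝ) : N p = Real.sqrt (gaugeSq p) := rfl

lemma N_eq_N_iff {p q : ℝ × ℝ × ℝ} : N p = N q ↔ gaugeSq p = gaugeSq q := by
  rw [N_eq_sqrt_gaugeSq, N_eq_sqrt_gaugeSq, Real.sqrt_inj (gaugeSq_nonneg p) (gaugeSq_nonneg q)]

lemma d_eq_d_iff {p q r s : ℝ × ℝ × ℝ} :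
    d p q = d r s ↔ gaugeSq (hmul (hinv p) q) = gaugeSq (hmul (hinv r) s) :=
  N_eq_N_iff

lemma gaugeSq_to_axis_point (b x y z : ℝ) :
    gaugeSq (hmul (hinv (x, y, z)) (0, b, 0)) =
      gaugeSq (hmul (hinv (0, 0, 0)) (x, y, z)) + b * ((x ^ 2 + 4) * (b - 2 * y) + 4 * x * z) / 4 := by
  simp only [gaugeSq, hmul, hinv]
  ring

theorem nil_bisector_y_axis (b x y z : ℝ) (hb : b ≠ 0) (hx : x ≠ 0) :
    d ((0 : ℝ), (0 : ℝ), (0 : ℝ)) (x, y, z) = d (x, y, z) ((0 : ℝ), b, (0 : ℝ)) ↔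
      z = -((x ^ 2 + 4) * (b - 2 * y)) / (4 * x) := by
  rw [d_eq_d_iff, gaugeSq_to_axis_point, eq_comm, add_eq_left, div_eq_zero_iff,
    mul_eq_zero, eq_div_iff (by positivity)]
  simp only [hb, false_or, four_ne_zero, or_false]
  constructor <;> intro h <;> linarith
end

section
/- Define the translation distance d(P,Q) = N(P⁻¹·Q) with N(x,y,z) = √(x² + y² + (z − xy/2)²) on the Heisenberg group (ℝ³,·). For the points A₁ = (0,0,0), A₂ = (−1,3,1), A₃ = (1/4,1/2,1/2), the triangle inequality fails: d(A₂,A₃) + d(A₁,A₃) < d(A₁,A₂). Explicitly, d(A₁,A₂) = √65/2, d(A₁,A₃) = √129/16, d(A₂,A₃) = √2529/16, and √2529 + √129 < 8√65. -/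
/-! The three distances are square roots of rationals computed from a closed form of `d`; the
failure of the triangle inequality then reduces to `√2529 + √129 < √4160`, which is checked by
squaring twice. -/

theorem d_eq_sqrt (a b c x y z : ℝ) :
    d (a, b, c) (x, y, z) =
      Real.sqrt ((x - a) ^ 2 + (y - b) ^ 2 + (z - c - (x + a) * (y - b) / 2) ^ 2) := by
  simp only [d, N, hmul, hinv]
  ring_nf

theorem Real.sqrt_eq_sqrt_div_of_eq {x k m : ℝ} (hm : 0 ≤ m) (h : x = k / m ^ 2) :
    Real.sqrt x = Real.sqrt k / m := by
  rw [h, Real.sqrt_div' k (sq_nonneg m), Real.sqrt_sq hm]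

theorem Real.sqrt_add_sqrt_lt_sqrt {a b c : ℝ} (ha : 0 ≤ a) (hb : 0 ≤ b) (hc : a + b < c)
    (h : 4 * a * b < (c - a - b) ^ 2) :
    Real.sqrt a + Real.sqrt b < Real.sqrt c := by
  have hab : 2 * Real.sqrt (a * b) < c - a - b := by
    rw [← Real.sqrt_sq zero_le_two, ← Real.sqrt_mul (sq_nonneg 2), Real.sqrt_lt' (by linarith)]
    linarith
  rw [Real.lt_sqrt (by positivity)]
  calc (Real.sqrt a + Real.sqrt b) ^ 2 = a + b + 2 * Real.sqrt (a * b) := by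
        rw [add_sq, Real.sq_sqrt ha, Real.sq_sqrt hb, Real.sqrt_mul ha]
        ring
    _ < c := by linarith

theorem nil_triangle_inequality_fails :
    d ((0 : ℝ), (0 : ℝ), (0 : ℝ)) ((-1 : ℝ), (3 : ℝ), (1 : ℝ)) = Real.sqrt 65 / 2 ∧
    d ((0 : ℝ), (0 : ℝ), (0 : ℝ)) ((1 / 4 : ℝ), (1 / 2 : ℝ), (1 / 2 : ℝ)) = Real.sqrt 129 / 16 ∧
    d ((-1 : ℝ), (3 : ℝ), (1 : ℝ)) ((1 / 4 : ℝ), (1 / 2 : ℝ), (1 / 2 : ℝ)) = Real.sqrt 2529 / 16 ∧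
    Real.sqrt 2529 + Real.sqrt 129 < 8 * Real.sqrt 65 ∧
    d ((-1 : ℝ), (3 : ℝ), (1 : ℝ)) ((1 / 4 : ℝ), (1 / 2 : ℝ), (1 / 2 : ℝ)) +
        d ((0 : ℝ), (0 : ℝ), (0 : ℝ)) ((1 / 4 : ℝ), (1 / 2 : ℝ), (1 / 2 : ℝ)) <
      d ((0 : ℝ), (0 : ℝ), (0 : ℝ)) ((-1 : ℝ), (3 : ℝ), (1 : ℝ)) := by
  have h₁₂ : d (0, 0, 0) (-1, 3, 1) = Real.sqrt 65 / 2 := by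
    rw [d_eq_sqrt]
    exact Real.sqrt_eq_sqrt_div_of_eq (by norm_num) (by norm_num)
  have h₁₃ : d (0, 0, 0) (1 / 4, 1 / 2, 1 / 2) = Real.sqrt 129 / 16 := by
    rw [d_eq_sqrt]
    exact Real.sqrt_eq_sqrt_div_of_eq (by norm_num) (by norm_num)
  have h₂₃ : d (-1, 3, 1) (1 / 4, 1 / 2, 1 / 2) = Real.sqrt 2529 / 16 := by
    rw [d_eq_sqrt]
    exact Real.sqrt_eq_sqrt_div_of_eq (by norm_num) (by norm_num)
  have h_sqrt : Real.sqrt 2529 + Real.sqrt 129 < 8 * Real.sqrt 65 := by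
    have h_eight : 8 * Real.sqrt 65 = Real.sqrt 4160 := by
      rw [show (4160 : ℝ) = 8 ^ 2 * 65 by norm_num, Real.sqrt_mul (by norm_num),
        Real.sqrt_sq (by norm_num)]
    rw [h_eight]
    exact Real.sqrt_add_sqrt_lt_sqrt (by norm_num) (by norm_num) (by norm_num) (by norm_num)
  refine ⟨h₁₂, h₁₃, h₂₃, h_sqrt, ?_⟩
  rw [h₁₂, h₁₃, h₂₃]
  linarith
end
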